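/- Let α be a partial action of a unital inverse semigroup S on an associative algebra A such that, for every s ∈ S, the ideal X_s is idempotent (X_s X_s = X_s) or non-degenerate. Then the algebraic crossed product A ⋊_α S is an associative algebra. -/

import Mathlib

open Finsupp

noncomputable section

/-- The natural partial order on an inverse semigroup: `r ≤ t` iff `r = t r* r`. -/
def sle {S : Type*} [Mul S] [Star S] (r t : S) : Prop := r = t * (star r * r)

/-- A partial action of a unital inverse semigroup `S` on an associative algebra `A`:
ideals `X s` and isomorphisms `act s : X (star s) → X s`. -/
structure PartialAction (S : Type*) [Monoid S] [StarMul S]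
    (A : Type*) [NonUnitalRing A] where
  X : S → Set A
  zero_mem : ∀ s, (0 : A) ∈ X s
  add_mem : ∀ s {a b : A}, a ∈ X s → b ∈ X s → a + b ∈ X s
  neg_mem : ∀ s {a : A}, a ∈ X s → -a ∈ X s
  mul_mem_left : ∀ s (a : A) {b : A}, b ∈ X s → a * b ∈ X s
  mul_mem_right : ∀ s (a : A) {b : A}, b ∈ X s → b * a ∈ X s
  act : S → A → A
  X_one : X 1 = Set.univ
  act_one : ∀ a : A, act 1 a = a
  act_add : ∀ s {a b : A}, a ∈ X (star s) → b ∈ X (star s) →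
    act s (a + b) = act s a + act s b
  act_mul : ∀ s {a b : A}, a ∈ X (star s) → b ∈ X (star s) →
    act s (a * b) = act s a * act s b
  mem_act : ∀ s {a : A}, a ∈ X (star s) → act s a ∈ X s
  act_act : ∀ s {a : A}, a ∈ X (star s) → act (star s) (act s a) = a
  range_eq : ∀ s t, act s '' (X (star s) ∩ X t) = X s ∩ X (s * t)
  comp : ∀ s t {a : A}, a ∈ X (star t) → act t a ∈ X t ∩ X (star s) →
    act s (act t a) = act (s * t) a

namespace PartialAction

variable {S : Type*} [Monoid S] [StarMul S] {A : Type*} [NonUnitalRing A]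
variable (P : PartialAction S A)

theorem mul_term_mem (s t : S) {a b : A} (ha : a ∈ P.X s) (hb : b ∈ P.X t) :
    P.act s (P.act (star s) a * b) ∈ P.X (s * t) := by
  have h1 : a ∈ P.X (star (star s)) := by rwa [star_star]
  have h2 := P.mem_act (star s) h1
  have h3 : P.act (star s) a * b ∈ P.X (star s) ∩ P.X t :=
    ⟨P.mul_mem_right _ b h2, P.mul_mem_left t _ hb⟩
  have h4 := Set.mem_image_of_mem (P.act s) h3
  rw [P.range_eq s t] at h4
  exact h4.2

theorem sum_mem {ι : Type*} (u : S) (tt : Finset ι) (F : ι → A)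
    (h : ∀ i ∈ tt, F i ∈ P.X u) : (∑ i ∈ tt, F i) ∈ P.X u :=
  Finset.sum_induction F (· ∈ P.X u) (fun _ _ ha hb => P.add_mem u ha hb)
    (P.zero_mem u) h

/-- The algebra `L` of formal sums `Σ a_s δ_s` with `a_s ∈ X s`. -/
def L : Type _ := {f : S →₀ A // ∀ u, f u ∈ P.X u}

instance : Zero P.L := ⟨⟨0, fun u => by simpa using P.zero_mem u⟩⟩

instance : Add P.L :=
  ⟨fun f g => ⟨f.1 + g.1, fun u => by
    rw [Finsupp.add_apply]; exact P.add_mem u (f.2 u) (g.2 u)⟩⟩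

instance : Mul P.L :=
  ⟨fun f g =>
    ⟨f.1.sum fun s a => g.1.sum fun t b =>
        Finsupp.single (s * t) (P.act s (P.act (star s) a * b)), by
      intro u
      classical
      rw [Finsupp.sum_apply]
      refine P.sum_mem u _ _ fun s hs => ?_
      dsimp only
      rw [Finsupp.sum_apply]
      refine P.sum_mem u _ _ fun t ht => ?_
      dsimp only
      rw [Finsupp.single_apply]
      split_ifs with h
      · exact h ▸ P.mul_term_mem s t (f.2 s) (g.2 t)
      · exact P.zero_mem u⟩⟩

/-- `a δ_r` as an element of `L`. -/
def del (r : S) (a : A) (h : a ∈ P.X r) : P.L :=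
  ⟨Finsupp.single r a, fun u => by
    classical
    rw [Finsupp.single_apply]
    split_ifs with hh
    · exact hh ▸ h
    · exact P.zero_mem u⟩

/-- The relation generating the ideal `I`: `a δ_r ~ a δ_t` whenever `r ≤ t`, `a ∈ X r`. -/
def crel : P.L → P.L → Prop := fun x y =>
  ∃ (r t : S) (a : A) (h : a ∈ P.X r) (h' : a ∈ P.X t),
    sle r t ∧ x = P.del r a h ∧ y = P.del t a h'

/-- The algebraic crossed product `A ⋊_α S = L / I`. -/
abbrev CP : Type _ := (ringConGen P.crel).Quotient

/-- The quotient map `L → A ⋊_α S`. -/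
def toCP : P.L → P.CP := fun x => (x : P.CP)

/-- The partial representation `s ↦ 1_s δ_s`, given identities `one s` for the ideals. -/
def rep (one : S → A) (hmem : ∀ s, one s ∈ P.X s) : S → P.CP :=
  fun s => P.toCP (P.del s (one s) (hmem s))

end PartialAction

/-!
Associativity of `L` reduces, monomial by monomial, to the coefficient identity
`α_{st}(α_{(st)*}(α_s(α_{s*}(a) b)) c) = α_s(α_{s*}(a) α_t(α_{t*}(b) c))`. Unwinding the
partial-action axioms reduces it to the Dokuchaev–Exel multiplier identity
`α_t(α_{t*}(a b) c) = a α_t(α_{t*}(b) c)` for `b ∈ X_t` and arbitrary `a, c`. When `b = p q`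
with `p, q ∈ X_t`, both sides equal `a p α_t(α_{t*}(q) c)`, which settles the idempotent case
by additivity. When `X_t` is non-degenerate, multiplying either side on the right by any
`y ∈ X_t` gives `a b α_t(c α_{t*}(y))`, so their difference, which lies in `X_t`, vanishes.
-/

section IdealConditions

variable {A : Type*}

def IsIdempotentIdeal [NonUnitalNonAssocSemiring A] (X : Set A) : Prop :=
  ∀ x ∈ X, x ∈ AddSubmonoid.closure {z : A | ∃ a ∈ X, ∃ b ∈ X, z = a * b}

def IsNondegenerateIdeal [MulZeroClass A] (X : Set A) : Prop :=
  ∀ x ∈ X, ((∀ y ∈ X, x * y = 0) ∨ (∀ y ∈ X, y * x = 0)) → x = 0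

end IdealConditions

namespace PartialAction

variable {S : Type*} [Monoid S] [StarMul S] {A : Type*} [NonUnitalRing A]
variable (P : PartialAction S A) {s t : S}

theorem act_zero (s : S) : P.act s 0 = 0 := by
  have h := P.act_add s (P.zero_mem (star s)) (P.zero_mem (star s))
  rw [add_zero] at h
  exact left_eq_add.mp h

theorem act_star_mem {a : A} (ha : a ∈ P.X s) : P.act (star s) a ∈ P.X (star s) :=
  P.mem_act (star s) (by rwa [star_star])

theorem act_act_star {a : A} (ha : a ∈ P.X s) : P.act s (P.act (star s) a) = a := by
  simpa using P.act_act (star s) (a := a) (by rwa [star_star])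

theorem act_star_add {a b : A} (ha : a ∈ P.X s) (hb : b ∈ P.X s) :
    P.act (star s) (a + b) = P.act (star s) a + P.act (star s) b :=
  P.act_add (star s) (by rwa [star_star]) (by rwa [star_star])

theorem act_star_mul {a b : A} (ha : a ∈ P.X s) (hb : b ∈ P.X s) :
    P.act (star s) (a * b) = P.act (star s) a * P.act (star s) b :=
  P.act_mul (star s) (by rwa [star_star]) (by rwa [star_star])

theorem act_act_star_mul {x z : A} (hx : x ∈ P.X s) (hz : z ∈ P.X (star s)) :
    P.act s (P.act (star s) x * z) = x * P.act s z := by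
  rw [P.act_mul s (P.act_star_mem hx) hz, P.act_act_star hx]

theorem act_mul_act_star {z y : A} (hz : z ∈ P.X (star s)) (hy : y ∈ P.X s) :
    P.act s (z * P.act (star s) y) = P.act s z * y := by
  rw [P.act_mul s hz (P.act_star_mem hy), P.act_act_star hy]

theorem act_star_mul_act {x : A} (hx : x ∈ P.X (star s) ∩ P.X t) :
    P.act (star (s * t)) (P.act s x) = P.act (star t) x := by
  have hback : P.act (star s) (P.act s x) = x := P.act_act s hx.1
  rw [star_mul, ← P.comp (star t) (star s) (by rw [star_star]; exact P.mem_act s hx.1)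
    (by rw [hback, star_star]; exact hx), hback]

/-- `(a δ_s) (b δ_t) = (mulCoeff s a b) δ_{st}` -/
def mulCoeff (s : S) (a b : A) : A := P.act s (P.act (star s) a * b)

theorem mulCoeff_mem {a b : A} (ha : a ∈ P.X s) (hb : b ∈ P.X t) :
    P.mulCoeff s a b ∈ P.X (s * t) :=
  P.mul_term_mem s t ha hb

theorem mulCoeff_zero_left (s : S) (b : A) : P.mulCoeff s 0 b = 0 := by
  simp [mulCoeff, act_zero]

theorem mulCoeff_zero_right (s : S) (a : A) : P.mulCoeff s a 0 = 0 := by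
  simp [mulCoeff, act_zero]

theorem mulCoeff_add_left {a a' : A} (b : A) (ha : a ∈ P.X s) (ha' : a' ∈ P.X s) :
    P.mulCoeff s (a + a') b = P.mulCoeff s a b + P.mulCoeff s a' b := by
  rw [mulCoeff, P.act_star_add ha ha', add_mul]
  exact P.act_add s (P.mul_mem_right _ b (P.act_star_mem ha))
    (P.mul_mem_right _ b (P.act_star_mem ha'))

theorem mulCoeff_add_right {a : A} (ha : a ∈ P.X s) (b b' : A) :
    P.mulCoeff s a (b + b') = P.mulCoeff s a b + P.mulCoeff s a b' := by
  rw [mulCoeff, mul_add]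
  exact P.act_add s (P.mul_mem_right _ b (P.act_star_mem ha))
    (P.mul_mem_right _ b' (P.act_star_mem ha))

theorem mulCoeff_mem_left {b : A} (hb : b ∈ P.X t) (c : A) : P.mulCoeff t b c ∈ P.X t :=
  P.mem_act t (P.mul_mem_right _ c (P.act_star_mem hb))

theorem mulCoeff_mul_left_of_mem {p q : A} (hp : p ∈ P.X t) (hq : q ∈ P.X t) (c : A) :
    P.mulCoeff t (p * q) c = p * P.mulCoeff t q c := by
  rw [mulCoeff, P.act_star_mul hp hq, mul_assoc,
    P.act_act_star_mul hp (P.mul_mem_right _ c (P.act_star_mem hq)), mulCoeff]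

theorem mulCoeff_mul_left_of_isIdempotentIdeal (hX : IsIdempotentIdeal (P.X t))
    (a c : A) {b : A} (hb : b ∈ P.X t) :
    P.mulCoeff t (a * b) c = a * P.mulCoeff t b c := by
  have hmem : ∀ x ∈ AddSubmonoid.closure {z : A | ∃ p ∈ P.X t, ∃ q ∈ P.X t, z = p * q},
      x ∈ P.X t := fun x hx =>
    AddSubmonoid.closure_induction (fun _ ⟨p, _, q, hq, e⟩ => e ▸ P.mul_mem_left t p hq)
      (P.zero_mem t) (fun _ _ _ _ => P.add_mem t) hx
  induction hX b hb using AddSubmonoid.closure_induction with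
  | mem z hz =>
    obtain ⟨p, hp, q, hq, rfl⟩ := hz
    rw [← mul_assoc, P.mulCoeff_mul_left_of_mem (P.mul_mem_left t a hp) hq,
      P.mulCoeff_mul_left_of_mem hp hq, mul_assoc]
  | zero => rw [mul_zero, mulCoeff_zero_left, mul_zero]
  | add x y hx hy ihx ihy =>
    have hx' := hmem x hx
    have hy' := hmem y hy
    rw [mul_add, P.mulCoeff_add_left c (P.mul_mem_left t a hx') (P.mul_mem_left t a hy'),
      P.mulCoeff_add_left c hx' hy', ihx hx', ihy hy', mul_add]

theorem mulCoeff_mul {x y : A} (hx : x ∈ P.X t) (hy : y ∈ P.X t) (c : A) :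
    P.mulCoeff t x c * y = x * P.act t (c * P.act (star t) y) := by
  rw [mulCoeff, ← P.act_mul_act_star (P.mul_mem_right _ c (P.act_star_mem hx)) hy, mul_assoc,
    P.act_act_star_mul hx (P.mul_mem_left _ c (P.act_star_mem hy))]

theorem mulCoeff_mul_left_of_isNondegenerateIdeal (hX : IsNondegenerateIdeal (P.X t))
    (a c : A) {b : A} (hb : b ∈ P.X t) :
    P.mulCoeff t (a * b) c = a * P.mulCoeff t b c := by
  have hab : a * b ∈ P.X t := P.mul_mem_left t a hb
  refine sub_eq_zero.mp (hX _ ?_ (Or.inl fun y hy => ?_))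
  · rw [sub_eq_add_neg]
    exact P.add_mem t (P.mulCoeff_mem_left hab c)
      (P.neg_mem t (P.mul_mem_left t a (P.mulCoeff_mem_left hb c)))
  · rw [sub_mul, mul_assoc, P.mulCoeff_mul hab hy,
      P.mulCoeff_mul hb hy, mul_assoc, sub_self]

theorem mulCoeff_mul_left (hX : IsIdempotentIdeal (P.X t) ∨ IsNondegenerateIdeal (P.X t))
    (a c : A) {b : A} (hb : b ∈ P.X t) :
    P.mulCoeff t (a * b) c = a * P.mulCoeff t b c :=
  hX.elim (fun h => P.mulCoeff_mul_left_of_isIdempotentIdeal h a c hb)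
    (fun h => P.mulCoeff_mul_left_of_isNondegenerateIdeal h a c hb)

theorem mulCoeff_assoc (hX : IsIdempotentIdeal (P.X t) ∨ IsNondegenerateIdeal (P.X t))
    {a b : A} (ha : a ∈ P.X s) (hb : b ∈ P.X t) (c : A) :
    P.mulCoeff (s * t) (P.mulCoeff s a b) c = P.mulCoeff s a (P.mulCoeff t b c) := by
  set a' := P.act (star s) a
  have ha' : a' ∈ P.X (star s) := P.act_star_mem ha
  have hab : a' * b ∈ P.X (star s) ∩ P.X t :=
    ⟨P.mul_mem_right _ b ha', P.mul_mem_left t a' hb⟩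
  have hmul := P.mulCoeff_mul_left hX a' c hb
  calc P.mulCoeff (s * t) (P.mulCoeff s a b) c
      = P.act (s * t) (P.act (star t) (a' * b) * c) := by
        rw [mulCoeff, mulCoeff, P.act_star_mul_act hab]
    _ = P.act s (P.mulCoeff t (a' * b) c) := by
        refine (P.comp s t (P.mul_mem_right _ c (P.act_star_mem hab.2)) ⟨?_, ?_⟩).symm
        · exact P.mulCoeff_mem_left hab.2 c
        · change P.mulCoeff t (a' * b) c ∈ _
          rw [hmul]
          exact P.mul_mem_right _ _ ha'
    _ = P.mulCoeff s a (P.mulCoeff t b c) := by rw [hmul]; rfl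

variable {P}

instance : SMul ℕ P.L :=
  ⟨fun n f => ⟨n • f.1, fun u => by
    rw [Finsupp.smul_apply]
    induction n with
    | zero => simpa using P.zero_mem u
    | succ n ih => rw [succ_nsmul]; exact P.add_mem u ih (f.2 u)⟩⟩

instance : AddCommMonoid P.L :=
  Function.Injective.addCommMonoid (M₁ := P.L) Subtype.val Subtype.val_injective rfl
    (fun _ _ => rfl) (fun _ _ => rfl)

namespace L

theorem val_sum {ι : Type*} (I : Finset ι) (F : ι → P.L) :
    (∑ i ∈ I, F i).1 = ∑ i ∈ I, (F i).1 :=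
  map_sum (AddMonoidHom.mk' Subtype.val fun _ _ => rfl : P.L →+ (S →₀ A)) F I

theorem eq_sum_del (f : P.L) : f = ∑ s ∈ f.1.support, P.del s (f.1 s) (f.2 s) :=
  Subtype.ext (by rw [val_sum]; exact (Finsupp.sum_single f.1).symm)

theorem mul_eq_sum (f g : P.L) {F G : Finset S} (hF : f.1.support ⊆ F) (hG : g.1.support ⊆ G) :
    f * g = ∑ s ∈ F, ∑ t ∈ G,
      P.del (s * t) (P.mulCoeff s (f.1 s) (g.1 t)) (P.mulCoeff_mem (f.2 s) (g.2 t)) := by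
  refine Subtype.ext ?_
  change (f.1.sum fun s a => g.1.sum fun t b => single (s * t) (P.mulCoeff s a b)) = _
  rw [Finsupp.sum_of_support_subset _ hF _ fun s _ => by simp [mulCoeff_zero_left], val_sum]
  refine Finset.sum_congr rfl fun s _ => ?_
  rw [Finsupp.sum_of_support_subset _ hG _ fun t _ => by simp [mulCoeff_zero_right], val_sum]
  rfl

theorem del_mul_del {a b : A} (ha : a ∈ P.X s) (hb : b ∈ P.X t) :
    P.del s a ha * P.del t b hb = P.del (s * t) (P.mulCoeff s a b) (P.mulCoeff_mem ha hb) := by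
  classical
  rw [mul_eq_sum _ _ support_single_subset support_single_subset, Finset.sum_singleton,
    Finset.sum_singleton]
  exact Subtype.ext (by simp [del])

protected theorem add_mul (f f' g : P.L) : (f + f') * g = f * g + f' * g := by
  classical
  rw [mul_eq_sum (f + f') g support_add subset_rfl,
    mul_eq_sum f g Finset.subset_union_left subset_rfl,
    mul_eq_sum f' g Finset.subset_union_right subset_rfl, ← Finset.sum_add_distrib]
  refine Finset.sum_congr rfl fun s _ => ?_
  rw [← Finset.sum_add_distrib]
  refine Finset.sum_congr rfl fun t _ => Subtype.ext ?_
  change single _ (P.mulCoeff s (f.1 s + f'.1 s) _) = single _ _ + single _ _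
  rw [P.mulCoeff_add_left _ (f.2 s) (f'.2 s), single_add]

protected theorem mul_add (f g g' : P.L) : f * (g + g') = f * g + f * g' := by
  classical
  rw [mul_eq_sum f (g + g') subset_rfl support_add,
    mul_eq_sum f g subset_rfl Finset.subset_union_left,
    mul_eq_sum f g' subset_rfl Finset.subset_union_right, ← Finset.sum_add_distrib]
  refine Finset.sum_congr rfl fun s _ => ?_
  rw [← Finset.sum_add_distrib]
  refine Finset.sum_congr rfl fun t _ => Subtype.ext ?_
  change single _ (P.mulCoeff s _ (g.1 t + g'.1 t)) = single _ _ + single _ _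
  rw [P.mulCoeff_add_right (f.2 s), single_add]

instance : NonUnitalNonAssocSemiring P.L where
  left_distrib := L.mul_add
  right_distrib := L.add_mul
  zero_mul g := by rw [mul_eq_sum 0 g (Finset.empty_subset _) subset_rfl, Finset.sum_empty]
  mul_zero f := by
    rw [mul_eq_sum f 0 subset_rfl (Finset.empty_subset _)]
    exact Finset.sum_eq_zero fun _ _ => Finset.sum_empty

protected theorem mul_assoc (hX : ∀ t, IsIdempotentIdeal (P.X t) ∨ IsNondegenerateIdeal (P.X t))
    (f g h : P.L) : f * g * h = f * (g * h) := by
  rw [eq_sum_del f, eq_sum_del g, eq_sum_del h]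
  simp only [Finset.sum_mul, Finset.mul_sum, del_mul_del]
  refine Finset.sum_congr rfl fun u _ => Finset.sum_congr rfl fun t _ =>
    Finset.sum_congr rfl fun s _ => Subtype.ext ?_
  change single _ _ = single _ _
  rw [mul_assoc, P.mulCoeff_assoc (hX t) (f.2 s) (g.2 t)]

end L

end PartialAction

theorem crossedProduct_assoc_general
    {S : Type*} [Monoid S] [StarMul S]
    {A : Type*} [NonUnitalRing A] (P : PartialAction S A)
    (hX : ∀ s : S,
      (∀ x ∈ P.X s,
        x ∈ AddSubmonoid.closure {z : A | ∃ a ∈ P.X s, ∃ b ∈ P.X s, z = a * b}) ∨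
      (∀ x ∈ P.X s,
        ((∀ y ∈ P.X s, x * y = 0) ∨ (∀ y ∈ P.X s, y * x = 0)) → x = 0)) :
    ∀ x y z : P.CP, x * y * z = x * (y * z) := fun x y z =>
  Quotient.inductionOn₃ x y z fun f g h =>
    congrArg (fun l : P.L => (l : P.CP)) (PartialAction.L.mul_assoc hX f g h)

/-- If each ideal `X_s` is idempotent or non-degenerate, the algebraic crossed
product `A ⋊_α S` is associative. -/
theorem crossedProduct_assoc
    {S : Type*} [Monoid S] [StarMul S]
    (hinv : ∀ s : S, s * star s * s = s)
    (hcomm : ∀ s t : S, (s * star s) * (t * star t) = (t * star t) * (s * star s))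
    {A : Type*} [NonUnitalRing A] (P : PartialAction S A)
    (hX : ∀ s : S,
      (∀ x ∈ P.X s,
        x ∈ AddSubmonoid.closure {z : A | ∃ a ∈ P.X s, ∃ b ∈ P.X s, z = a * b}) ∨
      (∀ x ∈ P.X s,
        ((∀ y ∈ P.X s, x * y = 0) ∨ (∀ y ∈ P.X s, y * x = 0)) → x = 0)) :
    ∀ x y z : P.CP, x * y * z = x * (y * z) :=
  crossedProduct_assoc_general P hX
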